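/- arXiv:2304.04410 — 9 statements merged into one kernel-verified Lean document; each statement's English description precedes it below -/
import Mathlib

section
/- Let ε > 0 be real and let d ≥ s ≥ 1 and t > s be integers. For every hash function H : 𝒴 → [t], the (d,s,ε,t)-Collision mechanism with hash H satisfies ε-LDP: writing P[z | x] for its output probabilities, every output probability lies in the interval [1/Ω, e^ε/Ω], and consequently P[z | x] ≤ e^ε · P[z | x'] for all x, x' ∈ 𝒳^s and all z ∈ [t]. -/
open Finset

/-- The predicate: `x` is a `d`-dimensional ternary vector with exactly `s` nonzero entries. -/
def IsSparseVec (d s : ℕ) (x : Fin d → ℤ) : Prop :=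
  (∀ j, x j = -1 ∨ x j = 0 ∨ x j = 1) ∧
    (Finset.univ.filter (fun j => x j ≠ 0)).card = s

/-- The domain 𝒳^s of s-sparse numerical vectors. -/
def SparseVec (d s : ℕ) := {x : Fin d → ℤ // IsSparseVec d s x}

/-- The event set Y_x ⊆ 𝒴 = [d] × {−,+}; `true` encodes `+` and `false` encodes `−`. -/
def eventSet {d s : ℕ} (x : SparseVec d s) : Finset (Fin d × Bool) :=
  Finset.univ.filter
    (fun jb => (jb.2 = true ∧ x.1 jb.1 = 1) ∨ (jb.2 = false ∧ x.1 jb.1 = -1))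

/-- Output probability `P[z | x]` of the (d,s,ε,t)-Collision mechanism with hash `H`. -/
noncomputable def collisionProb {d s t : ℕ} (ε : ℝ)
    (H : Fin d × Bool → Fin t) (x : SparseVec d s) (z : Fin t) : ℝ :=
  if z ∈ (eventSet x).image H then
    Real.exp ε / ((s : ℝ) * Real.exp ε + t - s)
  else
    (((s : ℝ) * Real.exp ε + t - s) - Real.exp ε * ((eventSet x).image H).card) /
      (((t : ℝ) - ((eventSet x).image H).card) * ((s : ℝ) * Real.exp ε + t - s))

lemma eventSet_card_le {d s : ℕ} (x : SparseVec d s) : (eventSet x).card ≤ s := by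
  refine le_trans ?_ (le_of_eq x.2.2)
  apply Finset.card_le_card_of_injOn Prod.fst
  · intro jb hjb
    simp only [eventSet, mem_coe, mem_filter, mem_univ, true_and] at hjb ⊢
    rcases hjb with ⟨h, h'⟩ | ⟨h, h'⟩ <;> simp [h']
  · intro a ha b hb hab
    simp only [eventSet, mem_coe, mem_filter, mem_univ, true_and] at ha hb
    have : a.2 = b.2 := by
      rw [hab] at ha
      rcases ha with ⟨h1, h2⟩ | ⟨h1, h2⟩ <;> rcases hb with ⟨h3, h4⟩ | ⟨h3, h4⟩
      · rw [h1, h3]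
      · omega
      · omega
      · rw [h1, h3]
    exact Prod.ext hab this

/-- the Collision mechanism satisfies ε-LDP: all output probabilities lie in
`[1/Ω, e^ε/Ω]`, and consequently `P[z|x] ≤ e^ε · P[z|x']` for all inputs and outputs. -/
theorem collision_is_LDP (ε : ℝ) (hε : 0 < ε) (d s t : ℕ)
    (hs : 1 ≤ s) (hsd : s ≤ d) (hst : s < t)
    (H : Fin d × Bool → Fin t) :
    (∀ (x : SparseVec d s) (z : Fin t),
        1 / ((s : ℝ) * Real.exp ε + t - s) ≤ collisionProb ε H x z ∧
        collisionProb ε H x z ≤ Real.exp ε / ((s : ℝ) * Real.exp ε + t - s)) ∧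
    (∀ (x x' : SparseVec d s) (z : Fin t),
        collisionProb ε H x z ≤ Real.exp ε * collisionProb ε H x' z) := by
  have hE1 : (1 : ℝ) < Real.exp ε := by
    have := Real.exp_lt_exp.mpr hε
    simpa using this
  have hst' : (s : ℝ) < t := by exact_mod_cast hst
  have hs1 : (1 : ℝ) ≤ s := by exact_mod_cast hs
  have hΩ : (0 : ℝ) < (s : ℝ) * Real.exp ε + t - s := by nlinarith
  have key : ∀ (x : SparseVec d s) (z : Fin t),
      1 / ((s : ℝ) * Real.exp ε + t - s) ≤ collisionProb ε H x z ∧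
      collisionProb ε H x z ≤ Real.exp ε / ((s : ℝ) * Real.exp ε + t - s) := by
    intro x z
    have hk : (((eventSet x).image H).card : ℝ) ≤ s := by
      exact_mod_cast le_trans Finset.card_image_le (eventSet_card_le x)
    set k : ℝ := (((eventSet x).image H).card : ℝ) with hkdef
    have hk0 : 0 ≤ k := Nat.cast_nonneg _
    have htk : 0 < (t : ℝ) - k := by linarith
    unfold collisionProb
    split
    · exact ⟨(div_le_div_iff_of_pos_right hΩ).mpr hE1.le, le_refl _⟩
    · rw [← hkdef]
      constructor
      · rw [div_le_div_iff₀ hΩ (by positivity)]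
        have h5 : (t : ℝ) - k ≤ ((s : ℝ) * Real.exp ε + t - s) - Real.exp ε * k := by
          nlinarith [mul_nonneg (sub_nonneg.mpr hk) (sub_nonneg.mpr hE1.le)]
        nlinarith [mul_le_mul_of_nonneg_right h5 hΩ.le]
      · rw [div_le_div_iff₀ (by positivity) hΩ]
        have h5 : ((s : ℝ) * Real.exp ε + t - s) - Real.exp ε * k ≤ Real.exp ε * ((t : ℝ) - k) := by
          nlinarith [mul_nonneg (sub_nonneg.mpr hst'.le) (sub_nonneg.mpr hE1.le)]
        nlinarith [mul_le_mul_of_nonneg_right h5 hΩ.le]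
  refine ⟨key, fun x x' z => ?_⟩
  have h1 := (key x z).2
  have h2 := (key x' z).1
  calc collisionProb ε H x z ≤ Real.exp ε / ((s : ℝ) * Real.exp ε + t - s) := h1
    _ = Real.exp ε * (1 / ((s : ℝ) * Real.exp ε + t - s)) := by ring
    _ ≤ Real.exp ε * collisionProb ε H x' z := by
        apply mul_le_mul_of_nonneg_left h2 (Real.exp_pos ε).le
end

section
/- Let ε > 0 be real, let d ≥ s ≥ 1 and t > s be integers, and let x ∈ 𝒳^s. Suppose the hash function H is drawn uniformly at random from all t^{2d} functions 𝒴 → [t] and, given H, z is drawn from the (d,s,ε,t)-Collision mechanism on x with hash H. Then for every event (j,b) ∈ 𝒴: if (j,b) ∈ Y_x then P[H(j,b) = z] = e^ε/Ω, and if (j,b) ∉ Y_x then P[H(j,b) = z] = 1/t, where Ω = s·e^ε + t − s. -/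
open Finset

/-- The probability `P[H(j,b) = z]` when `H` is uniform over all `t^(2d)` hash functions
`𝒴 → [t]` and, given `H`, `z` is drawn from the Collision mechanism on `x` with hash `H`. -/
noncomputable def collideProb (d s t : ℕ) (ε : ℝ) (x : SparseVec d s)
    (jb : Fin d × Bool) : ℝ :=
  (1 / (t : ℝ) ^ (2 * d)) *
    ∑ H : (Fin d × Bool) → Fin t, ∑ z : Fin t,
      collisionProb ε H x z * (if H jb = z then 1 else 0)

lemma card_eventSet {d s : ℕ} (x : SparseVec d s) : (eventSet x).card = s := by
  have key : (eventSet x).card = (Finset.univ.filter (fun j => x.1 j ≠ 0)).card := by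
    apply Finset.card_bij (fun jb _ => jb.1)
    · intro jb hjb
      simp only [eventSet, Finset.mem_filter, Finset.mem_univ, true_and] at hjb
      simp only [Finset.mem_filter, Finset.mem_univ, true_and]
      rcases hjb with ⟨_, h1⟩ | ⟨_, h1⟩ <;> simp [h1]
    · intro a ha b hb hab
      simp only [eventSet, Finset.mem_filter, Finset.mem_univ, true_and] at ha hb
      have : a.2 = b.2 := by
        rcases ha with ⟨ha2, ha1⟩ | ⟨ha2, ha1⟩ <;> rcases hb with ⟨hb2, hb1⟩ | ⟨hb2, hb1⟩ <;>
          (try rw [ha2, hb2]) <;> rw [hab] at ha1 <;> omega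
      exact Prod.ext hab this
    · intro j hj
      simp only [Finset.mem_filter, Finset.mem_univ, true_and] at hj
      rcases x.2.1 j with h | h | h
      · exact ⟨(j, false), by simp [eventSet, h]⟩
      · exact absurd h hj
      · exact ⟨(j, true), by simp [eventSet, h]⟩
  rw [key, x.2.2]

lemma sum_dist (s t : ℕ) (ε : ℝ) (K : Finset (Fin t)) (hK : K.card < t)
    (hΩ : 0 < (s : ℝ) * Real.exp ε + t - s) :
    ∑ z : Fin t, (if z ∈ K then
        Real.exp ε / ((s : ℝ) * Real.exp ε + t - s)
      else
        (((s : ℝ) * Real.exp ε + t - s) - Real.exp ε * K.card) /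
          (((t : ℝ) - K.card) * ((s : ℝ) * Real.exp ε + t - s))) = 1 := by
  set Ω := (s : ℝ) * Real.exp ε + t - s with hΩdef
  rw [← Finset.sum_add_sum_compl K]
  have h1 : ∑ z ∈ K, (if z ∈ K then Real.exp ε / Ω else
      (Ω - Real.exp ε * K.card) / (((t : ℝ) - K.card) * Ω)) = K.card * (Real.exp ε / Ω) := by
    rw [Finset.sum_congr rfl (fun z hz => if_pos hz), Finset.sum_const, nsmul_eq_mul]
  have h2 : ∑ z ∈ Kᶜ, (if z ∈ K then Real.exp ε / Ω else
      (Ω - Real.exp ε * K.card) / (((t : ℝ) - K.card) * Ω)) =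
      ((t : ℝ) - K.card) * ((Ω - Real.exp ε * K.card) / (((t : ℝ) - K.card) * Ω)) := by
    rw [Finset.sum_congr rfl (fun z hz => if_neg (Finset.mem_compl.mp hz)),
      Finset.sum_const, nsmul_eq_mul, Finset.card_compl, Fintype.card_fin,
      Nat.cast_sub hK.le]
  rw [h1, h2]
  have htK : (0 : ℝ) < (t : ℝ) - K.card := by
    have : (K.card : ℝ) < t := by exact_mod_cast hK
    linarith
  field_simp
  ring

/-- under a uniformly random hash function, the collision probability of an
event `(j,b)` is `e^ε/Ω` if `(j,b) ∈ Y_x` and `1/t` otherwise, where `Ω = s·e^ε + t − s`. -/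
theorem collision_collide_prob (ε : ℝ) (hε : 0 < ε) (d s t : ℕ)
    (hs : 1 ≤ s) (hsd : s ≤ d) (hst : s < t)
    (x : SparseVec d s) (jb : Fin d × Bool) :
    (jb ∈ eventSet x →
      collideProb d s t ε x jb = Real.exp ε / ((s : ℝ) * Real.exp ε + t - s)) ∧
    (jb ∉ eventSet x → collideProb d s t ε x jb = 1 / (t : ℝ)) := by
  have ht0 : 0 < t := lt_of_le_of_lt (Nat.zero_le s) hst
  have ht0R : (0 : ℝ) < t := by exact_mod_cast ht0
  have hΩ : 0 < (s : ℝ) * Real.exp ε + t - s := by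
    have h1 : (s : ℝ) < t := by exact_mod_cast hst
    nlinarith [Real.exp_pos ε, (Nat.cast_nonneg s : (0:ℝ) ≤ s)]
  have hcardfun : Fintype.card ((Fin d × Bool) → Fin t) = t ^ (2 * d) := by
    rw [Fintype.card_fun]; simp [Fintype.card_prod, mul_comm]
  have hinner : ∀ H : (Fin d × Bool) → Fin t,
      (∑ z : Fin t, collisionProb ε H x z * (if H jb = z then 1 else 0)) =
        collisionProb ε H x (H jb) := by
    intro H
    simp only [mul_ite, mul_one, mul_zero, Finset.sum_ite_eq, Finset.mem_univ, if_true]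
  constructor
  · intro hjb
    unfold collideProb
    rw [Finset.sum_congr rfl (fun H _ => hinner H)]
    have hval : ∀ H : (Fin d × Bool) → Fin t,
        collisionProb ε H x (H jb) = Real.exp ε / ((s : ℝ) * Real.exp ε + t - s) := by
      intro H
      unfold collisionProb
      rw [if_pos (Finset.mem_image_of_mem H hjb)]
    rw [Finset.sum_congr rfl (fun H _ => hval H), Finset.sum_const, nsmul_eq_mul,
      Finset.card_univ, hcardfun]
    have hpow : ((t : ℝ) ^ (2 * d)) ≠ 0 := by positivity
    push_cast
    field_simp
  · intro hjb
    unfold collideProb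
    rw [Finset.sum_congr rfl (fun H _ => hinner H)]
    set e := Equiv.funSplitAt jb (Fin t) with hedef
    rw [← Equiv.sum_comp e.symm (fun H => collisionProb ε H x (H jb)),
      Fintype.sum_prod_type_right]
    -- for fixed H', the image of eventSet is independent of v
    have hne : ∀ y ∈ eventSet x, y ≠ jb := fun y hy h => hjb (h ▸ hy)
    have himg : ∀ (v : Fin t) (H' : {y // y ≠ jb} → Fin t),
        (eventSet x).image (e.symm (v, H')) =
          (eventSet x).image (fun y => if h : y = jb then ⟨0, ht0⟩ else H' ⟨y, h⟩) := by
      intro v H'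
      apply Finset.image_congr
      intro y hy
      have hy' : y ≠ jb := hne y (by exact_mod_cast hy)
      simp [hedef, Equiv.funSplitAt_symm_apply, hy']
    have hsumv : ∀ H' : {y // y ≠ jb} → Fin t,
        ∑ v : Fin t, collisionProb ε (e.symm (v, H')) x ((e.symm (v, H')) jb) = 1 := by
      intro H'
      set K := (eventSet x).image (fun y => if h : y = jb then (⟨0, ht0⟩ : Fin t) else H' ⟨y, h⟩)
        with hKdef
      have hKcard : K.card < t := by
        calc K.card ≤ (eventSet x).card := Finset.card_image_le
        _ = s := card_eventSet x
        _ < t := hst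
      have : ∀ v : Fin t, collisionProb ε (e.symm (v, H')) x ((e.symm (v, H')) jb) =
          (if v ∈ K then Real.exp ε / ((s : ℝ) * Real.exp ε + t - s)
           else (((s : ℝ) * Real.exp ε + t - s) - Real.exp ε * K.card) /
             (((t : ℝ) - K.card) * ((s : ℝ) * Real.exp ε + t - s))) := by
        intro v
        have hjbv : (e.symm (v, H')) jb = v := by
          simp [hedef, Equiv.funSplitAt_symm_apply]
        rw [hjbv]
        unfold collisionProb
        rw [himg v H']
      rw [Finset.sum_congr rfl (fun v _ => this v)]
      exact sum_dist s t ε K hKcard hΩ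
    rw [Finset.sum_congr rfl (fun H' _ => hsumv H')]
    rw [Finset.sum_const, nsmul_eq_mul, Finset.card_univ, Fintype.card_fun]
    have hcard' : Fintype.card {y : Fin d × Bool // y ≠ jb} = 2 * d - 1 := by
      rw [Fintype.card_subtype_compl]
      simp [Fintype.card_prod, mul_comm]
    rw [hcard', Fintype.card_fin]
    have h2d : 2 * d = (2 * d - 1) + 1 := by omega
    rw [h2d, pow_succ]
    have hpow : ((t : ℝ) ^ (2 * d - 1)) ≠ 0 := by positivity
    push_cast
    field_simp
end

section
/- Let ε > 0 be real, let d ≥ s ≥ 1 and t > s be integers, and let x ∈ 𝒳^s. Suppose the hash function H is drawn uniformly at random from all t^{2d} functions 𝒴 → [t] and, given H, z is drawn from the (d,s,ε,t)-Collision mechanism on x with hash H. Then e^ε/Ω − 1/t > 0 and, for every event (j,b) ∈ 𝒴, E[ ( 𝟙[H(j,b) = z] − 1/t ) / ( e^ε/Ω − 1/t ) ] = 𝟙[(j,b) ∈ Y_x], i.e. the Collision indicator estimator is unbiased. -/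
open Finset

/-- The collision mechanism is a probability distribution. -/
lemma collisionProb_sum_one {d s t : ℕ} (ε : ℝ) (hs : 1 ≤ s) (hst : s < t)
    (H : Fin d × Bool → Fin t) (x : SparseVec d s)
    (hΩ : (0:ℝ) < (s : ℝ) * Real.exp ε + t - s) :
    ∑ z : Fin t, collisionProb ε H x z = 1 := by
  set S : Finset (Fin t) := (eventSet x).image H with hS
  have hk : S.card ≤ s := le_trans Finset.card_image_le (eventSet_card_le x)
  have hkt : S.card < t := lt_of_le_of_lt hk hst
  have hktR : (S.card : ℝ) < (t : ℝ) := by exact_mod_cast hkt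
  have hne : ((t : ℝ) - (S.card : ℝ)) ≠ 0 := by linarith
  have hcompl : (Sᶜ.card : ℝ) = (t : ℝ) - (S.card : ℝ) := by
    rw [Finset.card_compl, Fintype.card_fin, Nat.cast_sub (le_of_lt hkt)]
  rw [← Finset.sum_add_sum_compl S]
  have h1 : ∑ z ∈ S, collisionProb ε H x z
      = (S.card : ℝ) * (Real.exp ε / ((s : ℝ) * Real.exp ε + t - s)) := by
    rw [Finset.sum_congr rfl (fun z hz => by rw [collisionProb, if_pos hz]),
      Finset.sum_const, nsmul_eq_mul]
  have h2 : ∑ z ∈ Sᶜ, collisionProb ε H x z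
      = ((t : ℝ) - (S.card : ℝ)) *
        ((((s : ℝ) * Real.exp ε + t - s) - Real.exp ε * S.card) /
          (((t : ℝ) - S.card) * ((s : ℝ) * Real.exp ε + t - s))) := by
    rw [Finset.sum_congr rfl
      (fun z hz => by rw [collisionProb, if_neg (Finset.mem_compl.1 hz)]),
      Finset.sum_const, nsmul_eq_mul, hcompl]
  rw [h1, h2]
  have hΩne : (s : ℝ) * Real.exp ε + t - s ≠ 0 := ne_of_gt hΩ
  rw [mul_div_assoc', mul_div_assoc', mul_div_mul_left _ _ hne, ← add_div, div_eq_one_iff_eq hΩne]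
  ring

/-- the Collision indicator estimator is unbiased. Here the expectation is over
a uniformly random hash function `H : 𝒴 → [t]` (uniform over all `t^(2d)` functions) and,
given `H`, an output `z` drawn from the Collision mechanism on `x` with hash `H`. -/
theorem collision_estimator_unbiased (ε : ℝ) (hε : 0 < ε) (d s t : ℕ)
    (hs : 1 ≤ s) (hsd : s ≤ d) (hst : s < t)
    (x : SparseVec d s) (jb : Fin d × Bool) :
    0 < Real.exp ε / ((s : ℝ) * Real.exp ε + t - s) - 1 / (t : ℝ) ∧
    (1 / (t : ℝ) ^ (2 * d)) *
        (∑ H : (Fin d × Bool) → Fin t, ∑ z : Fin t,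
          collisionProb ε H x z *
            (((if H jb = z then (1 : ℝ) else 0) - 1 / (t : ℝ)) /
              (Real.exp ε / ((s : ℝ) * Real.exp ε + t - s) - 1 / (t : ℝ)))) =
      (if jb ∈ eventSet x then (1 : ℝ) else 0) := by
  have hexp : (1:ℝ) < Real.exp ε := by
    have h := Real.add_one_lt_exp (ne_of_gt hε); linarith
  have hs1 : (1:ℝ) ≤ (s:ℝ) := by exact_mod_cast hs
  have hts : (s:ℝ) < (t:ℝ) := by exact_mod_cast hst
  have hΩ : (0:ℝ) < (s:ℝ) * Real.exp ε + t - s := by nlinarith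
  have ht0 : (0:ℝ) < (t:ℝ) := by linarith
  have hD : (0:ℝ) < Real.exp ε / ((s:ℝ) * Real.exp ε + t - s) - 1 / (t:ℝ) := by
    rw [sub_pos, div_lt_div_iff₀ ht0 hΩ]
    nlinarith
  set D : ℝ := Real.exp ε / ((s:ℝ) * Real.exp ε + t - s) - 1 / (t:ℝ) with hDdef
  have hDne : D ≠ 0 := ne_of_gt hD
  have htne : (t:ℝ) ≠ 0 := ne_of_gt ht0
  refine ⟨hD, ?_⟩
  -- key simplification of the inner sum over z, for any distribution P and point w
  have key : ∀ (P : Fin t → ℝ) (w : Fin t),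
      ∑ z : Fin t, P z * (((if w = z then (1:ℝ) else 0) - 1 / (t:ℝ)) / D)
        = P w / D - (∑ z : Fin t, P z) * (1 / ((t:ℝ) * D)) := by
    intro P w
    have hterm : ∀ z : Fin t,
        P z * (((if w = z then (1:ℝ) else 0) - 1 / (t:ℝ)) / D)
          = (if w = z then P z / D else 0) - P z * (1 / ((t:ℝ) * D)) := by
      intro z
      split_ifs with h
      · field_simp
      · field_simp
        ring
    rw [Finset.sum_congr rfl (fun z _ => hterm z), Finset.sum_sub_distrib,
      Finset.sum_ite_eq, if_pos (Finset.mem_univ w), ← Finset.sum_mul]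
  by_cases hjb : jb ∈ eventSet x
  · rw [if_pos hjb]
    have hinner : ∀ H : (Fin d × Bool) → Fin t,
        ∑ z : Fin t, collisionProb ε H x z *
          (((if H jb = z then (1:ℝ) else 0) - 1 / (t:ℝ)) / D) = 1 := by
      intro H
      rw [key (collisionProb ε H x) (H jb),
        collisionProb_sum_one ε hs hst H x hΩ]
      have hmem : H jb ∈ (eventSet x).image H := Finset.mem_image_of_mem H hjb
      rw [collisionProb, if_pos hmem]
      have hne2 : Real.exp ε * (t:ℝ) - ((s:ℝ) * Real.exp ε + t - s) ≠ 0 := by nlinarith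
      have hΩne : (s : ℝ) * Real.exp ε + t - s ≠ 0 := ne_of_gt hΩ
      have h : Real.exp ε / ((s:ℝ) * Real.exp ε + t - s) = D + 1 / (t:ℝ) := by rw [hDdef]; ring
      rw [h]
      field_simp
      ring
    rw [Finset.sum_congr rfl (fun H _ => hinner H), Finset.sum_const,
      nsmul_eq_mul, mul_one, Finset.card_univ, Fintype.card_fun, Fintype.card_fin,
      Fintype.card_prod, Fintype.card_fin, Fintype.card_bool]
    have hcast : ((t ^ (d * 2) : ℕ) : ℝ) = (t:ℝ) ^ (2 * d) := by
      push_cast [mul_comm d 2]; ring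
    rw [hcast]
    have : (t:ℝ) ^ (2 * d) ≠ 0 := pow_ne_zero _ htne
    field_simp
  · rw [if_neg hjb]
    set e := Equiv.funSplitAt jb (Fin t) with he
    have hv0 : 0 < t := lt_of_le_of_lt (Nat.zero_le s) hst
    set v0 : Fin t := ⟨0, hv0⟩ with hv0def
    have hHjb : ∀ (v : Fin t) (g : {j : Fin d × Bool // j ≠ jb} → Fin t),
        e.symm (v, g) jb = v := by
      intro v g
      rw [he, Equiv.funSplitAt_symm_apply, dif_pos rfl]
    have hP : ∀ (v : Fin t) (g : {j : Fin d × Bool // j ≠ jb} → Fin t) (z : Fin t),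
        collisionProb ε (e.symm (v, g)) x z = collisionProb ε (e.symm (v0, g)) x z := by
      intro v g z
      have himg : (eventSet x).image (e.symm (v, g))
          = (eventSet x).image (e.symm (v0, g)) := by
        refine Finset.image_congr (fun i hi => ?_)
        have hne : i ≠ jb := fun h => hjb (h ▸ hi)
        rw [he, Equiv.funSplitAt_symm_apply, Equiv.funSplitAt_symm_apply,
          dif_neg hne, dif_neg hne]
      rw [collisionProb, collisionProb, himg]
    have hsplit :
        ∑ H : (Fin d × Bool) → Fin t, ∑ z : Fin t,
          collisionProb ε H x z *
            (((if H jb = z then (1:ℝ) else 0) - 1 / (t:ℝ)) / D) = 0 := by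
      rw [← e.symm.sum_comp
        (fun H => ∑ z : Fin t, collisionProb ε H x z *
          (((if H jb = z then (1:ℝ) else 0) - 1 / (t:ℝ)) / D)),
        Fintype.sum_prod_type, Finset.sum_comm]
      refine Finset.sum_eq_zero (fun g _ => ?_)
      calc ∑ v : Fin t, ∑ z : Fin t, collisionProb ε (e.symm (v, g)) x z *
              (((if e.symm (v, g) jb = z then (1:ℝ) else 0) - 1 / (t:ℝ)) / D)
          = ∑ v : Fin t, (collisionProb ε (e.symm (v0, g)) x v / D
              - (∑ z : Fin t, collisionProb ε (e.symm (v0, g)) x z) * (1 / ((t:ℝ) * D))) := by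
            refine Finset.sum_congr rfl (fun v _ => ?_)
            calc ∑ z : Fin t, collisionProb ε (e.symm (v, g)) x z *
                    (((if e.symm (v, g) jb = z then (1:ℝ) else 0) - 1 / (t:ℝ)) / D)
                = ∑ z : Fin t, collisionProb ε (e.symm (v0, g)) x z *
                    (((if v = z then (1:ℝ) else 0) - 1 / (t:ℝ)) / D) := by
                  refine Finset.sum_congr rfl (fun z _ => ?_)
                  rw [hP v g z, hHjb v g]
              _ = _ := key (collisionProb ε (e.symm (v0, g)) x) v
        _ = (∑ v : Fin t, collisionProb ε (e.symm (v0, g)) x v) / D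
              - (t : ℝ) * ((∑ z : Fin t, collisionProb ε (e.symm (v0, g)) x z)
                  * (1 / ((t:ℝ) * D))) := by
            rw [Finset.sum_sub_distrib, ← Finset.sum_div, Finset.sum_const,
              Finset.card_univ, Fintype.card_fin, nsmul_eq_mul]
        _ = 0 := by
            rw [collisionProb_sum_one ε hs hst _ x hΩ]
            field_simp
            ring
    rw [hsplit, mul_zero]
end

section
/- Let ε ≥ 0 be real and let s ≥ 1, t ≥ 2s+2, k be integers with 0 ≤ k ≤ s. Set Ω = s·(e^ε+1) + t − 2s. Then t − 2k ≥ 2 and 1 ≤ (Ω − k·(e^ε+1))/(t − 2k) ≤ (e^ε+1)/2; in particular the ratio (Ω − k·(e^ε+1))/(t − 2k) lies in the interval [1, e^ε]. -/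
/-- in the CoCo randomizer with sparsity `s`, privacy parameter `ε ≥ 0` and
output size `t ≥ 2s+2`, after `k ≤ s` bucket pairs have been assigned weights `e^ε` and `1`,
the redistributed relative weight `w = (Ω − k·(e^ε+1))/(t − 2k)` (with
`Ω = s·(e^ε+1) + t − 2s`) satisfies `t − 2k ≥ 2` and `1 ≤ w ≤ (e^ε+1)/2`; in particular
`w ∈ [1, e^ε]`. -/
theorem coco_weight_in_range (ε : ℝ) (hε : 0 ≤ ε) (s t k : ℕ)
    (hs : 1 ≤ s) (ht : 2 * s + 2 ≤ t) (hk : k ≤ s) :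
    2 ≤ (t : ℝ) - 2 * k ∧
    1 ≤ (((s : ℝ) * (Real.exp ε + 1) + t - 2 * s) - k * (Real.exp ε + 1)) /
        ((t : ℝ) - 2 * k) ∧
    (((s : ℝ) * (Real.exp ε + 1) + t - 2 * s) - k * (Real.exp ε + 1)) /
        ((t : ℝ) - 2 * k) ≤ (Real.exp ε + 1) / 2 ∧
    (((s : ℝ) * (Real.exp ε + 1) + t - 2 * s) - k * (Real.exp ε + 1)) /
        ((t : ℝ) - 2 * k) ∈ Set.Icc (1 : ℝ) (Real.exp ε) := by
  have hE : 1 ≤ Real.exp ε := Real.one_le_exp hε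
  have hts : (2:ℝ)*s + 2 ≤ t := by exact_mod_cast ht
  have hks : (k:ℝ) ≤ s := by exact_mod_cast hk
  have hd : 2 ≤ (t:ℝ) - 2*k := by linarith
  have hd0 : 0 < (t:ℝ) - 2*k := by linarith
  have h1 : 1 ≤ (((s : ℝ) * (Real.exp ε + 1) + t - 2 * s) - k * (Real.exp ε + 1)) /
      ((t : ℝ) - 2 * k) := by
    rw [le_div_iff₀ hd0]; nlinarith
  have h2 : (((s : ℝ) * (Real.exp ε + 1) + t - 2 * s) - k * (Real.exp ε + 1)) /
      ((t : ℝ) - 2 * k) ≤ (Real.exp ε + 1) / 2 := by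
    rw [div_le_div_iff₀ hd0 (by norm_num)]; nlinarith
  exact ⟨hd, h1, h2, h1, by linarith⟩
end

section
/- For all integers s ≥ 1 and t ≥ 2s+2: 1 − (t^s − (t−2)^s)/(2·t^{s−1}·s) ≤ 1/e, i.e. the overwrite probability P_ow of the CoCo mechanism is at most e^{−1}. -/
/-- the overwrite probability
`P_ow = 1 − (t^s − (t−2)^s)/(2·t^(s−1)·s)` of the CoCo mechanism is at most `e⁻¹` whenever
`s ≥ 1` and `t ≥ 2s+2`. -/
theorem coco_overwrite_prob_le_inv_e (s t : ℕ) (hs : 1 ≤ s) (ht : 2 * s + 2 ≤ t) :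
    1 - ((t : ℝ) ^ s - ((t : ℝ) - 2) ^ s) / (2 * (t : ℝ) ^ (s - 1) * s) ≤
      1 / Real.exp 1 := by
  have hS1 : (1:ℝ) ≤ (s:ℝ) := by exact_mod_cast hs
  have htS : 2*(s:ℝ) + 2 ≤ (t:ℝ) := by exact_mod_cast ht
  set T : ℝ := (t:ℝ) with hT
  set S : ℝ := (s:ℝ) with hSS
  have hT0 : 0 < T := by linarith
  have hS0 : 0 < S := by linarith
  set u : ℝ := 2*S/T with hu
  have hu0 : 0 < u := by positivity
  have hu1 : u ≤ 1 := by rw [hu, div_le_one hT0]; linarith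
  -- chord inequality for exp on [-1, 0]
  have hchord : u * (1 - Real.exp (-1)) ≤ 1 - Real.exp (-u) := by
    have h := convexOn_exp.2 (Set.mem_univ (0:ℝ)) (Set.mem_univ (-1:ℝ))
      (by linarith : (0:ℝ) ≤ 1-u) (le_of_lt hu0) (by ring)
    simp only [smul_eq_mul, mul_zero, Real.exp_zero, mul_one, zero_add] at h
    have h2 : Real.exp (-u) ≤ (1-u) + u * Real.exp (-1) := by
      have : u * (-1) = -u := by ring
      rw [this] at h; linarith
    linarith
  -- (T-2)^s ≤ exp(-u) * T^s
  have hbase : 0 ≤ T - 2 := by linarith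
  have h1 : T - 2 ≤ Real.exp (-(2/T)) * T := by
    have he : 1 - 2/T ≤ Real.exp (-(2/T)) := by
      have := Real.add_one_le_exp (-(2/T)); linarith
    have : (1 - 2/T) * T ≤ Real.exp (-(2/T)) * T :=
      mul_le_mul_of_nonneg_right he (le_of_lt hT0)
    calc T - 2 = (1 - 2/T) * T := by field_simp
      _ ≤ _ := this
  have hpow : (T-2)^s ≤ Real.exp (-u) * T^s := by
    have h2 : (T-2)^s ≤ (Real.exp (-(2/T)) * T)^s := pow_le_pow_left₀ hbase h1 s
    have h3 : (Real.exp (-(2/T)) * T)^s = Real.exp (-u) * T^s := by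
      rw [mul_pow, ← Real.exp_nat_mul]
      congr 2
      rw [hu]; field_simp
      rw [hSS]
    linarith [h2, h3.le]
  -- split T^s
  have hsplit : T^s = T^(s-1) * T := by
    rw [← pow_succ]; congr 1; omega
  have hTpow : 0 < T^(s-1) := pow_pos hT0 _
  -- key inequality
  have hkey : (1 - Real.exp (-1)) * (2 * T^(s-1) * S) ≤ T^s - (T-2)^s := by
    have h4 : T^s * (u * (1 - Real.exp (-1))) ≤ T^s * (1 - Real.exp (-u)) :=
      mul_le_mul_of_nonneg_left hchord (by positivity)
    have h5 : T^s * (u * (1 - Real.exp (-1))) = (1 - Real.exp (-1)) * (2 * T^(s-1) * S) := by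
      rw [hsplit, hu]; field_simp
    nlinarith [hpow]
  have hB : 0 < 2 * T^(s-1) * S := by positivity
  have hfrac : 1 - Real.exp (-1) ≤ (T^s - (T-2)^s) / (2 * T^(s-1) * S) := by
    rw [le_div_iff₀ hB]; exact hkey
  have : (1:ℝ)/Real.exp 1 = Real.exp (-1) := by
    rw [Real.exp_neg]; field_simp
  rw [this]
  linarith
end

section
/- Let ε > 0 be real and let s ≥ 1 and t ≥ 2s+2 be integers. Set Ω = s·(e^ε−1) + t and P_ow = 1 − (t^s − (t−2)^s)/(2·t^{s−1}·s). Then the opposite collision rate is strictly smaller than the false collision rate: P_ow·(e^ε+1)/(2Ω) + (1−P_ow)·(1/Ω) < 1/t. -/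
private lemma coco_aux1 (k : ℕ) (a b : ℝ) (hb : 0 ≤ b) (hab : b ≤ a) :
    ((k : ℝ) + 1) * b ^ k * (a - b) ≤ a ^ (k + 1) - b ^ (k + 1) := by
  induction k with
  | zero => simp
  | succ n ih =>
    have ha : 0 ≤ a := hb.trans hab
    have h2 : a * (((n : ℝ) + 1) * b ^ n * (a - b)) ≤ a * (a ^ (n + 1) - b ^ (n + 1)) :=
      mul_le_mul_of_nonneg_left ih ha
    have hbn : 0 ≤ b ^ n := pow_nonneg hb n
    have h3 : b * (((n : ℝ) + 1) * b ^ n * (a - b)) ≤ a * (((n : ℝ) + 1) * b ^ n * (a - b)) :=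
      mul_le_mul_of_nonneg_right hab
        (mul_nonneg (mul_nonneg (by positivity) hbn) (by linarith))
    have e1 : a ^ (n + 1 + 1) - b ^ (n + 1 + 1)
        = a * (a ^ (n + 1) - b ^ (n + 1)) + (a - b) * b ^ (n + 1) := by ring
    have e2 : ((n : ℝ) + 1 + 1) * b ^ (n + 1) * (a - b)
        = b * (((n : ℝ) + 1) * b ^ n * (a - b)) + (a - b) * b ^ (n + 1) := by ring
    push_cast
    linarith [h3.trans h2]

private lemma coco_aux2 (k : ℕ) (T : ℝ) (hT : 2 * k + 2 ≤ T) :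
    (T - 2 * k) * T ^ k ≤ T * (T - 2) ^ k := by
  induction k with
  | zero => simp
  | succ n ih =>
    have hT' : 2 * (n : ℝ) + 2 ≤ T := by push_cast at hT ⊢; linarith
    have ih' := ih hT'
    have hT0 : (0 : ℝ) ≤ T := by
      have : (0 : ℝ) ≤ (n : ℝ) := Nat.cast_nonneg n
      linarith
    have hTn : (0 : ℝ) ≤ T ^ n := pow_nonneg hT0 n
    have h2 : (0 : ℝ) ≤ T - 2 := by
      have : (0 : ℝ) ≤ (n : ℝ) := Nat.cast_nonneg n
      push_cast at hT; linarith
    have h3 : (T - 2) * ((T - 2 * n) * T ^ n) ≤ (T - 2) * (T * (T - 2) ^ n) :=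
      mul_le_mul_of_nonneg_left ih' h2
    have e1 : T * (T - 2) ^ (n + 1) = (T - 2) * (T * (T - 2) ^ n) := by ring
    have e2 : (T - 2) * ((T - 2 * (n : ℝ)) * T ^ n)
        = (T - 2 * ((n : ℝ) + 1)) * T ^ (n + 1) + 4 * (n : ℝ) * T ^ n := by ring
    have h4 : (0 : ℝ) ≤ 4 * (n : ℝ) * T ^ n := by positivity
    push_cast
    linarith

private lemma coco_aux3 (E S T P : ℝ) (hE : 1 < E) (hS : 0 < S) (hT : 0 < T)
    (hPT : P * T < 2 * S) :
    P * (E + 1) / (2 * (S * (E - 1) + T)) + (1 - P) * (1 / (S * (E - 1) + T)) < 1 / T := by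
  have hΩ : (0 : ℝ) < S * (E - 1) + T := by nlinarith
  have hlhs : P * (E + 1) / (2 * (S * (E - 1) + T)) + (1 - P) * (1 / (S * (E - 1) + T))
      = (1 + P * (E - 1) / 2) / (S * (E - 1) + T) := by
    field_simp
    ring
  rw [hlhs, div_lt_div_iff₀ hΩ hT]
  have hE1 : (0 : ℝ) < E - 1 := by linarith
  have key2 : (1 + P * (E - 1) / 2) * T = T + P * T * (E - 1) / 2 := by ring
  have key3 : P * T * (E - 1) < 2 * S * (E - 1) := mul_lt_mul_of_pos_right hPT hE1
  have key4 : 1 * (S * (E - 1) + T) = T + 2 * S * (E - 1) / 2 := by ring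
  linarith

/-- for the CoCo mechanism with sparsity `s ≥ 1`, privacy parameter `ε > 0`
and output size `t ≥ 2s+2`, with `Ω = s·(e^ε−1) + t` and overwrite probability
`P_ow = 1 − (t^s − (t−2)^s)/(2·t^(s−1)·s)`, the opposite collision rate
`P_o = P_ow·(e^ε+1)/(2Ω) + (1−P_ow)/Ω` is strictly smaller than the false collision rate
`P_f = 1/t`. -/
theorem coco_opposite_lt_false (ε : ℝ) (hε : 0 < ε) (s t : ℕ)
    (hs : 1 ≤ s) (ht : 2 * s + 2 ≤ t) :
    (1 - ((t : ℝ) ^ s - ((t : ℝ) - 2) ^ s) / (2 * (t : ℝ) ^ (s - 1) * s)) *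
        (Real.exp ε + 1) / (2 * ((s : ℝ) * (Real.exp ε - 1) + t)) +
      (1 - (1 - ((t : ℝ) ^ s - ((t : ℝ) - 2) ^ s) / (2 * (t : ℝ) ^ (s - 1) * s))) *
        (1 / ((s : ℝ) * (Real.exp ε - 1) + t)) <
      1 / (t : ℝ) := by
  obtain ⟨k, rfl⟩ : ∃ k, s = k + 1 := ⟨s - 1, by omega⟩
  have hTk : 2 * (k : ℝ) + 4 ≤ (t : ℝ) := by exact_mod_cast (by omega : 2 * k + 4 ≤ t)
  have hk0 : (0 : ℝ) ≤ (k : ℝ) := Nat.cast_nonneg k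
  have hT0 : (0 : ℝ) < (t : ℝ) := by linarith
  have hE : 1 < Real.exp ε := by
    have := Real.exp_lt_exp.mpr hε
    simpa using this
  have hS0 : (0 : ℝ) < (k : ℝ) + 1 := by linarith
  have hTkpos : (0 : ℝ) < (t : ℝ) ^ k := pow_pos hT0 k
  -- key polynomial inequality
  have h1 : ((k : ℝ) + 1) * ((t : ℝ) - 2) ^ k * 2
      ≤ (t : ℝ) ^ (k + 1) - ((t : ℝ) - 2) ^ (k + 1) := by
    have := coco_aux1 k (t : ℝ) ((t : ℝ) - 2) (by linarith) (by linarith)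
    linarith [this]
  have h2 : ((t : ℝ) - 2 * k) * (t : ℝ) ^ k ≤ (t : ℝ) * ((t : ℝ) - 2) ^ k :=
    coco_aux2 k (t : ℝ) (by linarith)
  have hkey : 2 * ((k : ℝ) + 1) * ((t : ℝ) - 2 * ((k : ℝ) + 1)) * (t : ℝ) ^ k
      < (t : ℝ) * ((t : ℝ) ^ (k + 1) - ((t : ℝ) - 2) ^ (k + 1)) := by
    nlinarith [mul_le_mul_of_nonneg_left h2 (by positivity : (0:ℝ) ≤ 2 * ((k : ℝ) + 1)),
      mul_le_mul_of_nonneg_left h1 hT0.le]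
  -- P * T < 2 * S
  have hden : (0 : ℝ) < 2 * (t : ℝ) ^ k * ((k : ℝ) + 1) := by positivity
  have hPT : (1 - ((t : ℝ) ^ (k + 1) - ((t : ℝ) - 2) ^ (k + 1))
        / (2 * (t : ℝ) ^ k * ((k : ℝ) + 1))) * (t : ℝ) < 2 * ((k : ℝ) + 1) := by
    set N : ℝ := (t : ℝ) ^ (k + 1) - ((t : ℝ) - 2) ^ (k + 1) with hN
    have hdiv : ((t : ℝ) - 2 * ((k : ℝ) + 1)) * (2 * (t : ℝ) ^ k * ((k : ℝ) + 1))
        < N * (t : ℝ) := by nlinarith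
    have hlt : (t : ℝ) - 2 * ((k : ℝ) + 1) < N * (t : ℝ) / (2 * (t : ℝ) ^ k * ((k : ℝ) + 1)) :=
      (lt_div_iff₀ hden).mpr hdiv
    have heq : (1 - N / (2 * (t : ℝ) ^ k * ((k : ℝ) + 1))) * (t : ℝ)
        = (t : ℝ) - N * (t : ℝ) / (2 * (t : ℝ) ^ k * ((k : ℝ) + 1)) := by
      field_simp
    linarith [heq]
  have main := coco_aux3 (Real.exp ε) ((k : ℝ) + 1) (t : ℝ)
    (1 - ((t : ℝ) ^ (k + 1) - ((t : ℝ) - 2) ^ (k + 1)) / (2 * (t : ℝ) ^ k * ((k : ℝ) + 1)))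
    hE hS0 hT0 hPT
  have hsub : k + 1 - 1 = k := rfl
  rw [hsub]
  push_cast
  convert main using 4 <;> push_cast <;> ring
end

section
/- There exists a universal constant C > 0 such that for all integers s ≥ 1 and d ≥ s, every ε ∈ (0,1], and t the smallest even integer with t ≥ e^ε·s + 5s, the following holds. Set Ω = s·(e^ε−1) + t, S = (e^ε+1)/Ω (the sum P_t + P_o of the true and opposite collision rates) and F = 1/t (the false collision rate). Then S − 2F > 0 and ( s·S·(1−S) + (d−s)·2F·(1−2F) ) / (S − 2F)² ≤ C·d·s/ε². -/
set_option maxHeartbeats 1000000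


/-- there is a universal constant `C > 0` such that, for all `1 ≤ s ≤ d`,
`ε ∈ (0,1]`, and `t` the smallest even integer with `t ≥ e^ε·s + 5s`, writing
`Ω = s·(e^ε−1) + t`, `S = (e^ε+1)/Ω` (the sum `P_t + P_o` of the true and opposite
collision rates of CoCo) and `F = 1/t` (the false collision rate), one has `S − 2F > 0`
and `(s·S·(1−S) + (d−s)·2F·(1−2F))/(S−2F)² ≤ C·d·s/ε²`. -/
theorem coco_nonmissing_frequency_mse_bound :
    ∃ C : ℝ, 0 < C ∧
      ∀ (s d : ℕ), 1 ≤ s → s ≤ d →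
      ∀ ε : ℝ, 0 < ε → ε ≤ 1 →
      ∀ t : ℕ, Even t → Real.exp ε * s + 5 * s ≤ (t : ℝ) →
        (∀ t' : ℕ, Even t' → Real.exp ε * s + 5 * s ≤ (t' : ℝ) → t ≤ t') →
        0 < (Real.exp ε + 1) / ((s : ℝ) * (Real.exp ε - 1) + t) - 2 * (1 / (t : ℝ)) ∧
        ((s : ℝ) * ((Real.exp ε + 1) / ((s : ℝ) * (Real.exp ε - 1) + t)) *
              (1 - (Real.exp ε + 1) / ((s : ℝ) * (Real.exp ε - 1) + t)) +
            ((d : ℝ) - s) * (2 * (1 / (t : ℝ))) * (1 - 2 * (1 / (t : ℝ)))) /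
          ((Real.exp ε + 1) / ((s : ℝ) * (Real.exp ε - 1) + t) - 2 * (1 / (t : ℝ))) ^ 2 ≤
          C * (d : ℝ) * s / ε ^ 2 := by
  refine ⟨540, by norm_num, ?_⟩
  intro s d hs hsd ε hε hε1 t ht hlb hmin
  have hεE : ε + 1 ≤ Real.exp ε := Real.add_one_le_exp ε
  have hE1 : (1:ℝ) < Real.exp ε := by linarith
  have hE3 : Real.exp ε ≤ 3 := by
    have h1 : Real.exp ε ≤ Real.exp 1 := Real.exp_le_exp.mpr hε1
    have := Real.exp_one_lt_d9
    linarith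
  have hs1 : (1:ℝ) ≤ (s:ℝ) := by exact_mod_cast hs
  have hds : (s:ℝ) ≤ (d:ℝ) := by exact_mod_cast hsd
  have hs0 : (0:ℝ) ≤ (s:ℝ) := by linarith
  have hd0 : (0:ℝ) ≤ (d:ℝ) := le_trans hs0 hds
  have hT6 : 6 * (s:ℝ) ≤ (t:ℝ) := by nlinarith
  have ht8 : t ≤ 8 * s + 2 := by
    apply hmin
    · exact ⟨4 * s + 1, by ring⟩
    · push_cast; nlinarith
  have hT8 : (t:ℝ) ≤ 8 * (s:ℝ) + 2 := by exact_mod_cast ht8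
  have hT10 : (t:ℝ) ≤ 10 * (s:ℝ) := by linarith
  have hT0 : (0:ℝ) < (t:ℝ) := by linarith
  set E := Real.exp ε with hEdef
  set Ω : ℝ := (s:ℝ) * (E - 1) + (t:ℝ) with hΩdef
  set A : ℝ := (E + 1) / Ω with hAdef
  set B : ℝ := 1 / (t:ℝ) with hBdef
  have hsE : (0:ℝ) ≤ (s:ℝ) * (E - 1) := by nlinarith
  have hΩ1 : (t:ℝ) ≤ Ω := by rw [hΩdef]; linarith
  have hΩ0 : (0:ℝ) < Ω := by linarith
  have hΩ2 : Ω ≤ 2 * (t:ℝ) := by rw [hΩdef]; nlinarith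
  have hDlb : ε / (3 * (t:ℝ)) ≤ A - 2 * B := by
    have hid : A - 2 * B = (E - 1) * ((t:ℝ) - 2 * (s:ℝ)) / (Ω * (t:ℝ)) := by
      rw [hAdef, hBdef, hΩdef]
      field_simp
      ring
    rw [hid, div_le_div_iff₀ (by positivity) (by positivity)]
    have hδ : 0 ≤ E - 1 - ε := by linarith
    have h1 : 0 ≤ (E - 1 - ε) * (3 * ((t:ℝ) - 2 * (s:ℝ)) - ε * (s:ℝ)) := by
      apply mul_nonneg hδ; nlinarith
    have h2 : 0 ≤ ε * (2 * (t:ℝ) - 6 * (s:ℝ) - ε * (s:ℝ)) := by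
      apply mul_nonneg hε.le; nlinarith
    rw [hΩdef]
    have key : (E - 1) * ((t:ℝ) - 2 * (s:ℝ)) * (3 * (t:ℝ))
        - ε * (((s:ℝ) * (E - 1) + (t:ℝ)) * (t:ℝ))
        = (t:ℝ) * ((E - 1 - ε) * (3 * ((t:ℝ) - 2 * (s:ℝ)) - ε * (s:ℝ))
          + ε * (2 * (t:ℝ) - 6 * (s:ℝ) - ε * (s:ℝ))) := by ring
    nlinarith [mul_nonneg (le_of_lt hT0) (add_nonneg h1 h2), key]
  have hDq : (0:ℝ) < ε / (3 * (t:ℝ)) := div_pos hε (by linarith)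
  have hDpos : 0 < A - 2 * B := lt_of_lt_of_le hDq hDlb
  refine ⟨hDpos, ?_⟩
  have hA0 : 0 ≤ A := by rw [hAdef]; positivity
  have hA4 : A ≤ 4 / (t:ℝ) := by
    rw [hAdef]
    exact div_le_div₀ (by norm_num) (by linarith) hT0 hΩ1
  have hAt : A * (t:ℝ) ≤ 4 := (le_div_iff₀ hT0).mp hA4
  have hA1 : A ≤ 1 := by
    have h4 : 4 / (t:ℝ) ≤ 1 := by rw [div_le_one hT0]; linarith
    linarith
  have hB0 : 0 ≤ B := by rw [hBdef]; positivity
  have hBt : B * (t:ℝ) = 1 := by rw [hBdef]; field_simp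
  have hB1 : 2 * B ≤ 1 := by
    rw [hBdef, mul_one_div, div_le_one hT0]; linarith
  have hN0 : 0 ≤ (s:ℝ) * A * (1 - A) + ((d:ℝ) - (s:ℝ)) * (2 * B) * (1 - 2 * B) := by
    have h1 := mul_nonneg (mul_nonneg hs0 hA0) (by linarith : (0:ℝ) ≤ 1 - A)
    have h2 := mul_nonneg (mul_nonneg (by linarith : (0:ℝ) ≤ (d:ℝ) - (s:ℝ))
      (by linarith : (0:ℝ) ≤ 2 * B)) (by linarith : (0:ℝ) ≤ 1 - 2 * B)
    linarith
  have hterm1 : (s:ℝ) * A * (1 - A) * (t:ℝ) ≤ 4 * (s:ℝ) := by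
    nlinarith [mul_nonneg (mul_nonneg (mul_nonneg hs0 hA0) hA0) hT0.le,
      mul_nonneg hs0 (by linarith : (0:ℝ) ≤ 4 - A * (t:ℝ))]
  have hterm2 : ((d:ℝ) - (s:ℝ)) * (2 * B) * (1 - 2 * B) * (t:ℝ) ≤ 2 * (d:ℝ) := by
    have hid : ((d:ℝ) - (s:ℝ)) * (2 * B) * (1 - 2 * B) * (t:ℝ)
        = ((d:ℝ) - (s:ℝ)) * 2 * (1 - 2 * B) := by
      rw [hBdef]; field_simp
    rw [hid]
    nlinarith [mul_nonneg (by linarith : (0:ℝ) ≤ (d:ℝ) - (s:ℝ)) hB0]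
  have hNt : ((s:ℝ) * A * (1 - A) + ((d:ℝ) - (s:ℝ)) * (2 * B) * (1 - 2 * B)) * (t:ℝ)
      ≤ 6 * (d:ℝ) := by nlinarith
  calc ((s:ℝ) * A * (1 - A) + ((d:ℝ) - (s:ℝ)) * (2 * B) * (1 - 2 * B)) / (A - 2 * B) ^ 2
      ≤ ((s:ℝ) * A * (1 - A) + ((d:ℝ) - (s:ℝ)) * (2 * B) * (1 - 2 * B)) / (ε / (3 * (t:ℝ))) ^ 2 := by
        apply div_le_div_of_nonneg_left hN0 (by positivity)
        exact pow_le_pow_left₀ hDq.le hDlb 2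
    _ ≤ 540 * (d:ℝ) * (s:ℝ) / ε ^ 2 := by
        rw [div_pow, div_div_eq_mul_div]
        apply div_le_div_of_nonneg_right ?_ (by positivity)
        nlinarith [mul_le_mul_of_nonneg_left hNt (by linarith : (0:ℝ) ≤ 9 * (t:ℝ)),
          mul_nonneg (by linarith : (0:ℝ) ≤ 10 * (s:ℝ) - (t:ℝ)) hd0, hT0]
end

section
/- There exists a universal constant C > 0 such that for all integers s ≥ 1 and d ≥ s, every ε ∈ (0,1], and t the smallest even integer with t ≥ e^ε·s + s + 2, the following holds. Set Ω = s·(e^ε−1) + t, P_ow = 1 − (t^s − (t−2)^s)/(2·t^{s−1}·s), S = (e^ε+1)/Ω (the sum P_t + P_o), Δ = (1−P_ow)·(e^ε−1)/Ω (the difference P_t − P_o), and F = 1/t. Then Δ > 0 and ( s·(S − Δ²) + (d−s)·2F ) / Δ² ≤ C·d·s/ε². -/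
theorem aux_pow_sub (b a : ℝ) (hb : 0 ≤ b) (hab : b ≤ a) :
    ∀ n : ℕ, (n : ℝ) * b ^ (n-1) * (a - b) ≤ a ^ n - b ^ n := by
  intro n
  induction n with
  | zero => simp
  | succ n ih =>
    rcases Nat.eq_zero_or_pos n with h0 | hn
    · subst h0; simp
    have hbn : b ^ n ≤ a ^ n := pow_le_pow_left₀ hb hab n
    have hkey : b ^ n = b ^ (n-1) * b := by
      rw [← pow_succ]; congr 1; omega
    have ha : 0 ≤ a := hb.trans hab
    have step1 : (n : ℝ) * b ^ (n-1) * (a - b) * b ≤ (a^n - b^n) * a := by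
      have h2 : (n : ℝ) * b ^ (n-1) * (a - b) * b ≤ (a^n - b^n) * b :=
        mul_le_mul_of_nonneg_right ih hb
      have h3 : (a^n - b^n) * b ≤ (a^n - b^n) * a :=
        mul_le_mul_of_nonneg_left hab (by linarith)
      linarith
    have : ((n:ℝ)+1) * b ^ n * (a - b) ≤ a^(n+1) - b^(n+1) := by
      have e1 : ((n:ℝ)+1) * b ^ n * (a - b)
          = (n : ℝ) * b ^ (n-1) * (a - b) * b + b^n * (a-b) := by
        rw [hkey]; ring
      have e2 : a^(n+1) - b^(n+1) = (a^n - b^n)*a + b^n*(a-b) := by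
        rw [pow_succ, pow_succ]; ring
      linarith
    simpa [pow_succ] using this

set_option maxHeartbeats 2000000 in
/-- there is a universal constant `C > 0` such that, for all `1 ≤ s ≤ d`,
`ε ∈ (0,1]`, and `t` the smallest even integer with `t ≥ e^ε·s + s + 2`, writing
`Ω = s·(e^ε−1) + t`, `P_ow = 1 − (t^s − (t−2)^s)/(2·t^(s−1)·s)`, `S = (e^ε+1)/Ω`
(the sum `P_t + P_o`), `Δ = (1−P_ow)·(e^ε−1)/Ω` (the difference `P_t − P_o`) and `F = 1/t`,
one has `Δ > 0` and `(s·(S − Δ²) + (d−s)·2F)/Δ² ≤ C·d·s/ε²`. -/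
theorem coco_mean_mse_bound :
    ∃ C : ℝ, 0 < C ∧
      ∀ (s d : ℕ), 1 ≤ s → s ≤ d →
      ∀ ε : ℝ, 0 < ε → ε ≤ 1 →
      ∀ t : ℕ, Even t → Real.exp ε * s + s + 2 ≤ (t : ℝ) →
        (∀ t' : ℕ, Even t' → Real.exp ε * s + s + 2 ≤ (t' : ℝ) → t ≤ t') →
        0 < (1 - (1 - ((t : ℝ) ^ s - ((t : ℝ) - 2) ^ s) / (2 * (t : ℝ) ^ (s - 1) * s))) *
              (Real.exp ε - 1) / ((s : ℝ) * (Real.exp ε - 1) + t) ∧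
        ((s : ℝ) * ((Real.exp ε + 1) / ((s : ℝ) * (Real.exp ε - 1) + t) -
              ((1 - (1 - ((t : ℝ) ^ s - ((t : ℝ) - 2) ^ s) / (2 * (t : ℝ) ^ (s - 1) * s))) *
                  (Real.exp ε - 1) / ((s : ℝ) * (Real.exp ε - 1) + t)) ^ 2) +
            ((d : ℝ) - s) * (2 * (1 / (t : ℝ)))) /
          ((1 - (1 - ((t : ℝ) ^ s - ((t : ℝ) - 2) ^ s) / (2 * (t : ℝ) ^ (s - 1) * s))) *
              (Real.exp ε - 1) / ((s : ℝ) * (Real.exp ε - 1) + t)) ^ 2 ≤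
          C * (d : ℝ) * s / ε ^ 2 := by
  refine ⟨2700, by norm_num, ?_⟩
  intro s d hs hsd ε hε0 hε1 t htEven htLB htMin
  simp only [sub_sub_cancel]
  have hsR1 : (1:ℝ) ≤ (s:ℝ) := by exact_mod_cast hs
  have hsd' : (s:ℝ) ≤ (d:ℝ) := by exact_mod_cast hsd
  set E := Real.exp ε with hE
  set T := (t : ℝ) with hT
  set sR := (s : ℝ) with hsR
  set dR := (d : ℝ) with hdR
  clear_value E T sR dR
  have hEε : ε + 1 ≤ E := by
    have := Real.add_one_le_exp ε; linarith
  have hE1 : 1 < E := by linarith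
  have hE3 : E ≤ 3 := by
    have h1 : E ≤ Real.exp 1 := by rw [hE]; exact Real.exp_le_exp.mpr hε1
    have := Real.exp_one_lt_d9
    linarith
  have htlb : 2*sR + 2 ≤ T := by nlinarith [htLB]
  have hT0 : 0 < T := by linarith
  have htub : T ≤ 8 * sR := by
    set x : ℝ := E * sR + sR + 2 with hx
    have hx0 : 0 ≤ x := by rw [hx]; nlinarith
    clear_value x
    set t' : ℕ := 2 * ⌈x / 2⌉₊ with ht'
    have ht'x : x ≤ (t' : ℝ) := by
      have := Nat.le_ceil (x / 2)
      push_cast [ht']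
      linarith
    have ht'ub : (t' : ℝ) ≤ x + 2 := by
      have := Nat.ceil_lt_add_one (by linarith : (0:ℝ) ≤ x / 2)
      push_cast [ht']
      linarith
    have htle : t ≤ t' := htMin t' ⟨⌈x/2⌉₊, by omega⟩ ht'x
    have h11 : (t:ℝ) ≤ (t':ℝ) := by exact_mod_cast htle
    rw [← hT] at h11
    nlinarith
  set Q := (T ^ s - (T - 2) ^ s) / (2 * T ^ (s - 1) * sR) with hQ
  clear_value Q
  have hT2 : 2 * sR ≤ T - 2 := by linarith
  have hT2pos : 0 < T - 2 := by linarith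
  have hTpow : T ^ (s-1) ≤ 3 * (T - 2) ^ (s-1) := by
    have h1 : T ≤ Real.exp (1/sR) * (T - 2) := by
      have h2 : 1 + 2/(T-2) ≤ Real.exp (2/(T-2)) := by
        have := Real.add_one_le_exp (2/(T-2)); linarith
      have h3 : 2/(T-2) ≤ 1/sR := by
        rw [div_le_div_iff₀ hT2pos (by linarith : (0:ℝ) < sR)]
        linarith
      have h4 : Real.exp (2/(T-2)) ≤ Real.exp (1/sR) := Real.exp_le_exp.mpr h3
      have h5 : T = (1 + 2/(T-2)) * (T-2) := by field_simp; ring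
      calc T = (1 + 2/(T-2)) * (T-2) := h5
        _ ≤ Real.exp (1/sR) * (T-2) := by
            apply mul_le_mul_of_nonneg_right (h2.trans h4) (by linarith)
    calc T ^ (s-1) ≤ (Real.exp (1/sR) * (T-2)) ^ (s-1) :=
          pow_le_pow_left₀ (by linarith) h1 _
      _ = Real.exp (1/sR) ^ (s-1) * (T-2)^(s-1) := mul_pow _ _ _
      _ ≤ 3 * (T-2)^(s-1) := by
          apply mul_le_mul_of_nonneg_right _ (pow_nonneg (by linarith) _)
          rw [← Real.exp_nat_mul]
          have hc : ((s-1:ℕ):ℝ) ≤ sR := by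
            rw [hsR]; exact_mod_cast Nat.sub_le s 1
          have h6 : ((s-1 : ℕ) : ℝ) * (1/sR) ≤ 1 := by
            rw [mul_one_div, div_le_one (by linarith : (0:ℝ) < sR)]
            exact hc
          calc Real.exp (((s-1:ℕ):ℝ) * (1/sR)) ≤ Real.exp 1 := Real.exp_le_exp.mpr h6
            _ ≤ 3 := by have := Real.exp_one_lt_d9; linarith
  have hQlb : 1/3 ≤ Q := by
    rw [hQ, le_div_iff₀ (mul_pos (mul_pos (by norm_num : (0:ℝ) < 2) (pow_pos hT0 (s-1))) (by linarith))]
    have haux := aux_pow_sub (T-2) T (by linarith) (by linarith) s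
    have hs' : (s : ℝ) * (T-2)^(s-1) * (T - (T-2)) = 2 * sR * (T-2)^(s-1) := by
      rw [← hsR]; ring
    have h7 : 2 * sR * (T-2)^(s-1) ≤ T^s - (T-2)^s := by
      rw [← hs']; exact haux
    nlinarith [mul_le_mul_of_nonneg_left hTpow (by linarith : (0:ℝ) ≤ sR)]
  have hQpos : 0 < Q := by linarith
  set Om := sR * (E - 1) + T with hOm
  clear_value Om
  have hOmT : T ≤ Om := by
    rw [hOm]
    nlinarith [mul_nonneg (by linarith : (0:ℝ) ≤ sR) (by linarith : (0:ℝ) ≤ E - 1)]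
  have hOmpos : 0 < Om := lt_of_lt_of_le hT0 hOmT
  have hOmub : Om ≤ 10 * sR := by
    have : sR * (E-1) ≤ sR * 2 := mul_le_mul_of_nonneg_left (by linarith) (by linarith)
    rw [hOm]; linarith
  set Δ := Q * (E - 1) / Om with hΔ
  clear_value Δ
  have hΔpos : 0 < Δ := by
    rw [hΔ]
    apply div_pos _ hOmpos
    exact mul_pos hQpos (by linarith)
  have hΔlb : ε / (30 * sR) ≤ Δ := by
    rw [hΔ, div_le_div_iff₀ (by linarith : (0:ℝ) < 30 * sR) hOmpos]
    have h8 : ε ≤ E - 1 := by linarith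
    have hQE : (1/3) * ε ≤ Q * (E - 1) :=
      mul_le_mul hQlb h8 (le_of_lt hε0) (le_of_lt hQpos)
    have hb := mul_le_mul_of_nonneg_right hQE (show (0:ℝ) ≤ 30 * sR by linarith)
    have ha := mul_le_mul_of_nonneg_left hOmub (le_of_lt hε0)
    linarith
  refine ⟨hΔpos, ?_⟩
  have hNub : sR * ((E + 1) / Om - Δ^2) + (dR - sR) * (2 * (1/T)) ≤ 3 * dR / sR := by
    have hS : (E+1)/Om ≤ 4 / T := by
      rw [div_le_div_iff₀ hOmpos hT0]
      have := mul_le_mul_of_nonneg_right (show E + 1 ≤ 4 by linarith) (le_of_lt hT0)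
      linarith
    have h9 : sR * ((E + 1) / Om - Δ^2) ≤ sR * (4/T) := by
      have : (E+1)/Om - Δ^2 ≤ 4/T := by linarith [sq_nonneg Δ]
      exact mul_le_mul_of_nonneg_left this (by linarith)
    have h10 : (dR - sR) * (2 * (1/T)) ≤ 2 * dR * (1/T) := by
      have h1T : (0:ℝ) ≤ 1/T := le_of_lt (by rw [one_div]; exact inv_pos.mpr hT0)
      have := mul_nonneg (show (0:ℝ) ≤ sR by linarith) h1T
      linarith
    have h12 : sR * (4/T) + 2*dR*(1/T) = (4*sR + 2*dR)/T := by
      rw [mul_one_div, mul_div_assoc', ← add_div]; ring_nf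
    have h13 : (4*sR + 2*dR)/T ≤ 3*dR/sR := by
      rw [div_le_div_iff₀ hT0 (by linarith : (0:ℝ) < sR)]
      have ha := mul_le_mul_of_nonneg_left htlb (show (0:ℝ) ≤ 3*dR by nlinarith)
      have hb := mul_le_mul_of_nonneg_right hsd' (show (0:ℝ) ≤ sR by linarith)
      nlinarith
    linarith
  have hsR0 : (0:ℝ) < sR := by linarith
  have hεs : 0 < ε / (30 * sR) := div_pos hε0 (by linarith)
  have hNnn : (0:ℝ) ≤ 3 * dR / sR := div_nonneg (by linarith) (by linarith)
  have hsq : (ε / (30 * sR))^2 ≤ Δ^2 :=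
    pow_le_pow_left₀ (le_of_lt hεs) hΔlb 2
  have hfin : (sR * ((E + 1) / Om - Δ^2) + (dR - sR) * (2 * (1/T))) / Δ^2
      ≤ (3 * dR / sR) / ((ε / (30 * sR))^2) :=
    div_le_div₀ hNnn hNub (pow_pos hεs 2) hsq
  have hsne : sR ≠ 0 := ne_of_gt hsR0
  have hεne : ε ≠ 0 := ne_of_gt hε0
  have heq : (3 * dR / sR) / ((ε / (30 * sR))^2) = 2700 * dR * sR / ε^2 := by
    field_simp
    ring
  linarith [hfin.trans_eq heq]
end

section
/- Let d ≥ s ≥ 1 be integers, let x ∈ 𝒳^s, and let P_t, P_o, P_f be reals with 0 ≤ P_t, 0 ≤ P_o, 0 ≤ P_f, P_t + P_o ≤ 1 and 2·P_f ≤ 1. For each j ∈ [d] let (I_{j,+}, I_{j,−}) be a pair of {0,1}-valued random variables whose joint law is: (1,0), (0,1), (0,0) with probabilities P_t, P_o, 1−P_t−P_o if x_j = +1; with probabilities P_o, P_t, 1−P_t−P_o if x_j = −1; and with probabilities P_f, P_f, 1−2·P_f if x_j = 0. Then: (i) if P_t + P_o ≠ 2·P_f, the non-missing-frequency estimators û_j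 = (I_{j,+} + I_{j,−} − 2·P_f)/(P_t + P_o − 2·P_f) satisfy Σ_{j=1}^d E[ (û_j − 𝟙[x_j ≠ 0])² ] = ( s·(P_t+P_o)(1−P_t−P_o) + (d−s)·2·P_f·(1−2·P_f) ) / (P_t+P_o−2·P_f)²; and (ii) if P_t ≠ P_o, the mean estimators m̂_j = (I_{j,+} − I_{j,−})/(P_t − P_o) satisfy Σ_{j=1}^d E[ (m̂_j − x_j)² ] = ( s·((P_t+P_o) − (P_t−P_o)²) + (d−s)·2·P_f ) / (P_t−P_o)². -/
open Finset

/-- Expectation of `g (I_{j,+}) (I_{j,−})` for a pair of `{0,1}`-valued random variables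
whose joint law is `(1,0), (0,1), (0,0)` with probabilities `(Pt, Po, 1−Pt−Po)` when the
entry `v` is `+1`, `(Po, Pt, 1−Pt−Po)` when `v = −1`, and `(Pf, Pf, 1−2Pf)` when `v = 0`.
Since the pair takes only these three values, this determines the expectation of any
function of the pair. -/
noncomputable def pairExp (Pt Po Pf : ℝ) (v : ℤ) (g : ℝ → ℝ → ℝ) : ℝ :=
  if v = 1 then Pt * g 1 0 + Po * g 0 1 + (1 - Pt - Po) * g 0 0
  else if v = -1 then Po * g 1 0 + Pt * g 0 1 + (1 - Pt - Po) * g 0 0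
  else Pf * g 1 0 + Pf * g 0 1 + (1 - 2 * Pf) * g 0 0

lemma term1 (Pt Po Pf : ℝ) (hD : Pt + Po - 2 * Pf ≠ 0) (v : ℤ)
    (hv : v = -1 ∨ v = 0 ∨ v = 1) :
    pairExp Pt Po Pf v
        (fun a b => ((a + b - 2 * Pf) / (Pt + Po - 2 * Pf) -
          (if v ≠ 0 then (1 : ℝ) else 0)) ^ 2) =
      if v ≠ 0 then (Pt + Po) * (1 - Pt - Po) / (Pt + Po - 2 * Pf) ^ 2
      else 2 * Pf * (1 - 2 * Pf) / (Pt + Po - 2 * Pf) ^ 2 := by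
  rcases hv with h | h | h <;> subst h <;> simp [pairExp] <;> field_simp <;> ring

lemma term2 (Pt Po Pf : ℝ) (hQ : Pt - Po ≠ 0) (v : ℤ)
    (hv : v = -1 ∨ v = 0 ∨ v = 1) :
    pairExp Pt Po Pf v
        (fun a b => ((a - b) / (Pt - Po) - (v : ℝ)) ^ 2) =
      if v ≠ 0 then ((Pt + Po) - (Pt - Po) ^ 2) / (Pt - Po) ^ 2
      else 2 * Pf / (Pt - Po) ^ 2 := by
  rcases hv with h | h | h <;> subst h <;> simp [pairExp] <;> field_simp <;> ring

/-- exact mean-squared-error formulas for the CoCo estimators.  For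
`x ∈ 𝒳^s` and collision rates `Pt, Po, Pf` as in the hypotheses, (i) the
non-missing-frequency estimators `û_j = (I_{j,+} + I_{j,−} − 2Pf)/(Pt + Po − 2Pf)` satisfy
`Σ_j E[(û_j − 𝟙[x_j ≠ 0])²] = (s·(Pt+Po)(1−Pt−Po) + (d−s)·2Pf(1−2Pf))/(Pt+Po−2Pf)²`, and
(ii) the mean estimators `m̂_j = (I_{j,+} − I_{j,−})/(Pt − Po)` satisfy
`Σ_j E[(m̂_j − x_j)²] = (s·((Pt+Po) − (Pt−Po)²) + (d−s)·2Pf)/(Pt−Po)²`. -/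
theorem coco_mse_formulas (d s : ℕ) (hs : 1 ≤ s) (hsd : s ≤ d)
    (x : SparseVec d s) (Pt Po Pf : ℝ)
    (hPt : 0 ≤ Pt) (hPo : 0 ≤ Po) (hPf : 0 ≤ Pf)
    (hsum : Pt + Po ≤ 1) (hPf2 : 2 * Pf ≤ 1) :
    (Pt + Po ≠ 2 * Pf →
      ∑ j : Fin d, pairExp Pt Po Pf (x.1 j)
          (fun a b => ((a + b - 2 * Pf) / (Pt + Po - 2 * Pf) -
            (if x.1 j ≠ 0 then (1 : ℝ) else 0)) ^ 2) =
        ((s : ℝ) * (Pt + Po) * (1 - Pt - Po) + ((d : ℝ) - s) * (2 * Pf) * (1 - 2 * Pf)) /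
          (Pt + Po - 2 * Pf) ^ 2) ∧
    (Pt ≠ Po →
      ∑ j : Fin d, pairExp Pt Po Pf (x.1 j)
          (fun a b => ((a - b) / (Pt - Po) - (x.1 j : ℝ)) ^ 2) =
        ((s : ℝ) * ((Pt + Po) - (Pt - Po) ^ 2) + ((d : ℝ) - s) * (2 * Pf)) /
          (Pt - Po) ^ 2) := by
  obtain ⟨xv, hx1, hx2⟩ := x
  have hcard1 : (Finset.univ.filter (fun j => xv j ≠ 0)).card = s := hx2
  have hcard2 : (Finset.univ.filter (fun j => ¬ xv j ≠ 0)).card = d - s := by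
    have := Finset.card_filter_add_card_filter_not
      (s := (Finset.univ : Finset (Fin d))) (p := fun j => xv j ≠ 0)
    simp only [Finset.card_univ, Fintype.card_fin] at this
    omega
  have hds : ((d - s : ℕ) : ℝ) = (d : ℝ) - s := by
    rw [Nat.cast_sub hsd]
  constructor
  · intro hne
    have hD : Pt + Po - 2 * Pf ≠ 0 := sub_ne_zero.mpr hne
    rw [Finset.sum_congr rfl (fun j _ => term1 Pt Po Pf hD (xv j) (hx1 j))]
    rw [Finset.sum_ite, Finset.sum_const, Finset.sum_const, hcard1, hcard2,
      nsmul_eq_mul, nsmul_eq_mul, hds]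
    field_simp
  · intro hne
    have hQ : Pt - Po ≠ 0 := sub_ne_zero.mpr hne
    rw [Finset.sum_congr rfl (fun j _ => term2 Pt Po Pf hQ (xv j) (hx1 j))]
    rw [Finset.sum_ite, Finset.sum_const, Finset.sum_const, hcard1, hcard2,
      nsmul_eq_mul, nsmul_eq_mul, hds]
    field_simp
end
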